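/- For d ≥ 0 define the integer D_d := |{X ∈ {0,1}^{2^d} : T_d(X) = Par(X)}| − |{X ∈ {0,1}^{2^d} : T_d(X) ≠ Par(X)}| (the correlation between T_d and parity). Then D_0 = 2, and for every d ≥ 1 one has 2·D_d = (−1)^d · D_{d−1}². -/

import Mathlib

/-- The parity (XOR) of the bits of `X ∈ {0,1}ⁿ`: `true` iff the Hamming weight is odd. -/
def parity {n : ℕ} (X : Fin n → Bool) : Bool :=
  decide ((Finset.univ.filter (fun i => X i = true)).card % 2 = 1)

/-- The complete binary AND/OR tree `T_d : {0,1}^{2^d} → {0,1}`: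
`T_0(x) = x`; for `d > 0`, the root is an AND gate if `d` is odd and an OR gate
if `d` is even, applied to the two half-trees `T_{d-1}`. -/
def andOrTree : (d : ℕ) → (Fin (2 ^ d) → Bool) → Bool
  | 0, X => X ⟨0, by norm_num⟩
  | d + 1, X =>
    let L := andOrTree d (fun i =>
      X (Fin.castLE (Nat.pow_le_pow_right (by norm_num) (Nat.le_succ d)) i))
    let R := andOrTree d (fun i =>
      X ⟨2 ^ d + i.val, by have := i.isLt; rw [pow_succ]; omega⟩)
    if (d + 1) % 2 = 1 then L && R else L || R

/-- `D_d`: the correlation between `T_d` and parity, i.e. the number of inputs on which they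
agree minus the number of inputs on which they disagree. -/
def corrD (d : ℕ) : ℤ :=
  ((Finset.univ.filter
      (fun X : Fin (2 ^ d) → Bool => andOrTree d X = parity X)).card : ℤ) -
  ((Finset.univ.filter
      (fun X : Fin (2 ^ d) → Bool => andOrTree d X ≠ parity X)).card : ℤ)

/-!
Write `χ b = (-1)^b`, so that `D_d = ∑_X χ(T_d X) χ(Par X)` and `χ(Par X) = ∏ᵢ χ(Xᵢ)`.
An input of `T_{d+1}` is a pair `(L, R)` of inputs of `T_d`, and `χ` of the parity of the pair
is `χ(Par L) χ(Par R)`. Expanding the root gate in the characters,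
`2 χ(a ∧ b) = 1 + χ a + χ b - χ a χ b` and `2 χ(a ∨ b) = -1 + χ a + χ b + χ a χ b`;
after summing over `L` and `R`, every term except the last one contains a factor
`∑_X χ(Par X) = 0`, and the last one gives `∓ D_d²`.
-/

open Finset

def boolSign (b : Bool) : ℤ := if b then -1 else 1

lemma boolSign_mul_boolSign (a b : Bool) :
    boolSign a * boolSign b = if a = b then 1 else -1 := by
  cases a <;> cases b <;> rfl

lemma boolSign_parity {n : ℕ} (X : Fin n → Bool) :
    boolSign (parity X) = ∏ i, boolSign (X i) := by
  simp only [boolSign, prod_ite, prod_const, one_pow, mul_one]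
  rw [neg_one_pow_eq_pow_mod_two, parity]
  rcases Nat.mod_two_eq_zero_or_one #{i | X i = true} with h | h <;> simp [h]

lemma sum_boolSign_parity {n : ℕ} (hn : n ≠ 0) :
    ∑ X : Fin n → Bool, boolSign (parity X) = 0 := by
  simp only [boolSign_parity]
  rw [← Fintype.prod_sum fun (_ : Fin n) b => boolSign b]
  simp [boolSign, hn]

lemma boolSign_parity_append {m n : ℕ} (L : Fin m → Bool) (R : Fin n → Bool) :
    boolSign (parity (Fin.append L R)) = boolSign (parity L) * boolSign (parity R) := by
  simp only [boolSign_parity, Fin.prod_univ_add, Fin.append_left, Fin.append_right]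

lemma boolSign_parity_comp_equiv {m n : ℕ} (e : Fin m ≃ Fin n) (X : Fin n → Bool) :
    boolSign (parity (X ∘ e)) = boolSign (parity X) := by
  simp only [boolSign_parity, Function.comp_apply, e.prod_comp (fun i => boolSign (X i))]

def parityCorr {n : ℕ} (f : (Fin n → Bool) → Bool) : ℤ :=
  ∑ X, boolSign (f X) * boolSign (parity X)

lemma corrD_eq_parityCorr (d : ℕ) : corrD d = parityCorr (andOrTree d) := by
  simp only [parityCorr, boolSign_mul_boolSign, sum_ite, sum_const, corrD]
  ring

lemma two_mul_sum_boolSign_op_mul_parity {n : ℕ} (hn : n ≠ 0) (f g : (Fin n → Bool) → Bool)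
    (op : Bool → Bool → Bool) (c u v s : ℤ)
    (hop : ∀ a b, 2 * boolSign (op a b) =
      c + u * boolSign a + v * boolSign b + s * (boolSign a * boolSign b)) :
    2 * ∑ L, ∑ R, boolSign (op (f L) (g R)) * (boolSign (parity L) * boolSign (parity R)) =
      s * (parityCorr f * parityCorr g) := by
  have hP := sum_boolSign_parity hn
  calc _ = ∑ L, ∑ R,
        (c * (boolSign (parity L) * boolSign (parity R))
          + u * (boolSign (f L) * boolSign (parity L) * boolSign (parity R))
          + v * (boolSign (parity L) * (boolSign (g R) * boolSign (parity R)))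
          + s * (boolSign (f L) * boolSign (parity L) *
              (boolSign (g R) * boolSign (parity R)))) := by
        simp only [mul_sum, ← mul_assoc, hop]
        refine sum_congr rfl fun L _ => sum_congr rfl fun R _ => ?_
        ring
    _ = _ := by
        simp only [sum_add_distrib, ← mul_sum, ← sum_mul, hP, parityCorr]
        ring

def rootGate (k : ℕ) (a b : Bool) : Bool := if k % 2 = 1 then a && b else a || b

lemma two_mul_boolSign_rootGate (k : ℕ) (a b : Bool) :
    2 * boolSign (rootGate k a b) =
      -(-1) ^ k + 1 * boolSign a + 1 * boolSign b + (-1) ^ k * (boolSign a * boolSign b) := by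
  rw [neg_one_pow_eq_pow_mod_two, rootGate]
  rcases Nat.mod_two_eq_zero_or_one k with h | h <;> cases a <;> cases b <;> simp [h, boolSign]

def halvesEquiv (d : ℕ) :
    (Fin (2 ^ d) → Bool) × (Fin (2 ^ d) → Bool) ≃ (Fin (2 ^ (d + 1)) → Bool) :=
  (Fin.appendEquiv _ _).trans ((finCongr (Nat.two_pow_succ d).symm).arrowCongr (Equiv.refl Bool))

lemma andOrTree_succ_append (d : ℕ) (L R : Fin (2 ^ d) → Bool) :
    andOrTree (d + 1) (Fin.append L R ∘ finCongr (Nat.two_pow_succ d)) =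
      rootGate (d + 1) (andOrTree d L) (andOrTree d R) := by
  have hL : (fun i => (Fin.append L R ∘ finCongr (Nat.two_pow_succ d))
      (Fin.castLE (Nat.pow_le_pow_right (by norm_num) (Nat.le_succ d)) i)) = L :=
    funext (Fin.append_left L R)
  have hR : (fun i : Fin (2 ^ d) => (Fin.append L R ∘ finCongr (Nat.two_pow_succ d))
      ⟨2 ^ d + i.val, by have := i.isLt; rw [pow_succ]; omega⟩) = R :=
    funext (Fin.append_right L R)
  simp only [andOrTree, rootGate, hL, hR]

lemma parityCorr_andOrTree_succ (d : ℕ) :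
    parityCorr (andOrTree (d + 1)) = ∑ L, ∑ R,
      boolSign (rootGate (d + 1) (andOrTree d L) (andOrTree d R)) *
        (boolSign (parity L) * boolSign (parity R)) := by
  rw [parityCorr, ← (halvesEquiv d).sum_comp, Fintype.sum_prod_type]
  refine sum_congr rfl fun L _ => sum_congr rfl fun R _ => ?_
  change boolSign (andOrTree (d + 1) (Fin.append L R ∘ finCongr (Nat.two_pow_succ d))) *
    boolSign (parity (Fin.append L R ∘ finCongr (Nat.two_pow_succ d))) = _
  rw [andOrTree_succ_append, boolSign_parity_comp_equiv, boolSign_parity_append]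

lemma two_mul_corrD_succ (d : ℕ) : 2 * corrD (d + 1) = (-1) ^ (d + 1) * corrD d ^ 2 := by
  rw [corrD_eq_parityCorr, corrD_eq_parityCorr, parityCorr_andOrTree_succ,
    two_mul_sum_boolSign_op_mul_parity (by positivity) _ _ _ _ _ _ _
      (two_mul_boolSign_rootGate (d + 1))]
  ring

/-- `D_0 = 2`, and for every `d ≥ 1`, `2·D_d = (−1)^d · D_{d−1}²`. -/
theorem corrD_recurrence :
    corrD 0 = 2 ∧ ∀ d : ℕ, 1 ≤ d → 2 * corrD d = (-1) ^ d * (corrD (d - 1)) ^ 2 := by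
  refine ⟨by decide, fun d hd => ?_⟩
  obtain ⟨k, rfl⟩ := Nat.exists_eq_add_of_le' hd
  exact two_mul_corrD_succ k
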